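/- Let m, k, l, N be positive integers with m > 1 and 1 ≤ l < k. If z_0 ∈ ℂ is a root of W_N^{[m,k,l]}, then for every m-th root of unity ζ (in particular ζ = e^{2πij/m} for each j = 0,1,…,m−1), the point ζ·z_0 is also a root of W_N^{[m,k,l]}. -/

import Mathlib

open scoped BigOperators

/-- `pPoly m j` is the polynomial `p_j^{[m]}(z) = ∑_{i=0}^{⌊j/m⌋} z^{j-im}/(i!(j-im)!)`
for `j ≥ 0`, and `0` for `j < 0`. -/
noncomputable def pPoly (m : ℕ) : ℤ → Polynomial ℂ := fun j =>
  if 0 ≤ j then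
    ∑ i ∈ Finset.range (j.toNat / m + 1),
      Polynomial.C (((Nat.factorial i * Nat.factorial (j.toNat - i * m) : ℕ) : ℂ))⁻¹ *
        Polynomial.X ^ (j.toNat - i * m)
  else 0

/-- The normalizing constant `c_N^{[m,k,l]} = k^{-N(N-1)/2} ∏_{i=1}^{N} (k(i-1)+l)!/(i-1)!`. -/
noncomputable def cConst (k l N : ℕ) : ℂ :=
  ((k : ℂ) ^ (N * (N - 1) / 2))⁻¹ *
    ∏ i ∈ Finset.range N, ((Nat.factorial (k * i + l) : ℂ) / ((Nat.factorial i : ℕ) : ℂ))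

/-- The generalized Wronskian–Hermite polynomial
`W_N^{[m,k,l]}(z) = c_N^{[m,k,l]} · det_{1≤i,j≤N} ( p^{[m]}_{k(j-1)+l-i+1}(z) )`. -/
noncomputable def WPoly (m k l N : ℕ) : Polynomial ℂ :=
  Polynomial.C (cConst k l N) *
    Matrix.det (Matrix.of fun i j : Fin N =>
      pPoly m (((k * (j : ℕ) + l : ℕ) : ℤ) - ((i : ℕ) : ℤ)))

/-!
Every monomial `z^(n - i m)` of `p_n^{[m]}` picks up the same factor `ζ^n` under `z ↦ ζ z`
when `ζ^m = 1`, so `p_n^{[m]}(ζ z) = ζ^n p_n^{[m]}(z)`. Hence the Wronskian matrix at `ζ z`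
is the one at `z` with row `i` divided by `ζ^i` and column `j` multiplied by `ζ^(k j + l)`,
and `W_N^{[m,k,l]}(ζ z)` is a nonzero multiple of `W_N^{[m,k,l]}(z)`.
-/

open Polynomial

lemma pPoly_of_neg (m : ℕ) {j : ℤ} (hj : j < 0) : pPoly m j = 0 :=
  if_neg hj.not_ge

lemma pPoly_natCast (m n : ℕ) :
    pPoly m n = ∑ i ∈ Finset.range (n / m + 1),
      C (((i.factorial * (n - i * m).factorial : ℕ) : ℂ))⁻¹ * X ^ (n - i * m) :=
  if_pos n.cast_nonneg

lemma pPoly_eval_mul_of_pow_eq_one {m : ℕ} {ζ : ℂ} (hζ : ζ ^ m = 1) (z : ℂ) (n : ℕ) :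
    (pPoly m n).eval (ζ * z) = ζ ^ n * (pPoly m n).eval z := by
  simp only [pPoly_natCast, eval_finsetSum, eval_mul, eval_C, eval_pow, eval_X, mul_pow,
    Finset.mul_sum]
  refine Finset.sum_congr rfl fun i hi => ?_
  have him : i * m ≤ n := (Nat.mul_le_mul_right m (Finset.mem_range_succ_iff.mp hi)).trans
    (Nat.div_mul_le_self n m)
  have hpow : ζ ^ (n - i * m) = ζ ^ n := by
    rw [← mul_one (ζ ^ (n - i * m)), ← one_pow i, ← hζ, ← pow_mul, ← pow_add,
      mul_comm m, Nat.sub_add_cancel him]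
  rw [hpow]
  ring

lemma pow_mul_pPoly_sub_eval_mul_of_pow_eq_one {m : ℕ} {ζ : ℂ} (hζ : ζ ^ m = 1) (z : ℂ)
    (n i : ℕ) :
    ζ ^ i * (pPoly m (n - i)).eval (ζ * z) = ζ ^ n * (pPoly m (n - i)).eval z := by
  rcases le_or_gt i n with hin | hni
  · obtain ⟨d, rfl⟩ := Nat.exists_eq_add_of_le hin
    have hsub : ((i + d : ℕ) : ℤ) - i = d := by push_cast; ring
    rw [hsub, pPoly_eval_mul_of_pow_eq_one hζ, pow_add]
    ring
  · simp [pPoly_of_neg m (Int.sub_neg_of_lt (Int.ofNat_lt.mpr hni))]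

lemma WPoly_eval (m k l N : ℕ) (w : ℂ) :
    (WPoly m k l N).eval w = cConst k l N * (Matrix.of fun i j : Fin N =>
      (pPoly m (((k * (j : ℕ) + l : ℕ) : ℤ) - ((i : ℕ) : ℤ))).eval w).det := by
  rw [WPoly, eval_mul, eval_C, ← coe_evalRingHom, RingHom.map_det]
  rfl

lemma WPoly_eval_mul_of_pow_eq_one (m k l N : ℕ) {ζ : ℂ} (hζ : ζ ^ m = 1) (z : ℂ) :
    (∏ i : Fin N, ζ ^ (i : ℕ)) * (WPoly m k l N).eval (ζ * z) =
      (∏ j : Fin N, ζ ^ (k * (j : ℕ) + l)) * (WPoly m k l N).eval z := by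
  rw [WPoly_eval, WPoly_eval, mul_left_comm, ← Matrix.det_mul_column,
    mul_left_comm _ (cConst k l N), ← Matrix.det_mul_row]
  congr 2
  ext i j
  exact pow_mul_pPoly_sub_eval_mul_of_pow_eq_one hζ z _ _

theorem wronskianHermite_root_rotation_general
    (m k l N : ℕ) (hm : 1 < m)
    (z₀ : ℂ) (hz₀ : (WPoly m k l N).IsRoot z₀) (ζ : ℂ) (hζ : ζ ^ m = 1) :
    (WPoly m k l N).IsRoot (ζ * z₀) := by
  have hζ₀ : ζ ≠ 0 := (IsUnit.of_pow_eq_one hζ (by omega)).ne_zero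
  have h := WPoly_eval_mul_of_pow_eq_one m k l N hζ z₀
  rw [hz₀.eq_zero, mul_zero] at h
  exact (mul_eq_zero.mp h).resolve_left
    (Finset.prod_ne_zero_iff.mpr fun _ _ => pow_ne_zero _ hζ₀)

/-- For positive integers `m, k, l, N` with `m > 1` and `1 ≤ l < k`, if `z₀` is a root of
`W_N^{[m,k,l]}` and `ζ` is an `m`-th root of unity, then `ζ·z₀` is also a root. -/
theorem wronskianHermite_root_rotation
    (m k l N : ℕ) (hm : 1 < m) (hl : 1 ≤ l) (hlk : l < k) (hN : 0 < N)
    (z₀ : ℂ) (hz₀ : (WPoly m k l N).IsRoot z₀) (ζ : ℂ) (hζ : ζ ^ m = 1) :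
    (WPoly m k l N).IsRoot (ζ * z₀) :=
  wronskianHermite_root_rotation_general m k l N hm z₀ hz₀ ζ hζ
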